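/- For every countable ordinal α there exists a completely metrizable topological space X_α and a subset A_α ⊂ X_α such that the oscillation rank of the characteristic function χ_{A_α} equals exactly α. -/

import Mathlib

open Set Filter Ordinal ENNReal

universe u v

section Defs

variable {X : Type u} {E : Type v}

/-- `f` restricted to `A` is `ε`-fragmented: every nonempty subset of `A` has a relatively
open nonempty piece on which the oscillation (diameter of the image) of `f` is at most `ε`. -/
def EpsFragOn [TopologicalSpace X] [PseudoEMetricSpace E] (f : X → E) (A : Set X)
    (ε : ℝ≥0∞) : Prop :=
  ∀ F : Set X, F ⊆ A → F.Nonempty → ∃ V : Set X, IsOpen V ∧ (V ∩ F).Nonempty ∧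
    EMetric.diam (f '' (V ∩ F)) ≤ ε

/-- The fragmentability index `frag f = inf {ε > 0 : f is ε-fragmented}` (with `inf ∅ = ∞`). -/
noncomputable def fragIdx [TopologicalSpace X] [PseudoEMetricSpace E] (f : X → E) : ℝ≥0∞ :=
  sInf {ε | 0 < ε ∧ EpsFragOn f Set.univ ε}

/-- A set `H` is resolvable: every nonempty `A ⊆ X` has a relatively open nonempty piece
entirely inside `H` or entirely inside its complement. -/
def Resolvable [TopologicalSpace X] (H : Set X) : Prop :=
  ∀ A : Set X, A.Nonempty → ∃ U : Set X, IsOpen U ∧ (U ∩ A).Nonempty ∧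
    (U ∩ A ⊆ H ∨ U ∩ A ⊆ Hᶜ)

/-- The σ-fragmentability index by resolvable sets. -/
noncomputable def sfragIdx [TopologicalSpace X] [PseudoEMetricSpace E] (f : X → E) : ℝ≥0∞ :=
  sInf {ε | 0 < ε ∧ ∃ H : ℕ → Set X, (∀ n, Resolvable (H n)) ∧ (⋃ n, H n) = Set.univ ∧
    ∀ n, EpsFragOn f (H n) ε}

/-- `g` is constant on each set of some resolvable partition of `X`, i.e. on each difference
`U (γ+1) \ U γ` of an increasing transfinite sequence of open sets from `∅` to `X`,
continuous at limit ordinals. -/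
def ConstOnResolvablePartition [TopologicalSpace X] (g : X → E) : Prop :=
  ∃ (κ : Ordinal.{u}) (U : Ordinal.{u} → Set X),
    (∀ α, IsOpen (U α)) ∧ (∀ α β : Ordinal, α ≤ β → U α ⊆ U β) ∧
    U 0 = ∅ ∧ U κ = Set.univ ∧
    (∀ γ, γ ≤ κ → Order.IsSuccLimit γ → U γ = ⋃ α < γ, U α) ∧
    (∀ γ < κ, ∀ x ∈ U (γ + 1) \ U γ, ∀ y ∈ U (γ + 1) \ U γ, g x = g y)

/-- The transfinite derivation of open sets in the definition of the oscillation rank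
`β(f, ε)`:  `U 0 = ∅`, `U (α+1) = U α ∪ {x ∉ U α : ∃ open V ∋ x, diam f (V \ U α) < ε}`,
and unions at limit ordinals. -/
noncomputable def oscSet [TopologicalSpace X] [PseudoEMetricSpace E] (f : X → E)
    (ε : ℝ≥0∞) (o : Ordinal.{u}) : Set X :=
  Ordinal.limitRecOn o ∅
    (fun _ U => U ∪ {x | x ∉ U ∧ ∃ V : Set X, IsOpen V ∧ x ∈ V ∧
      EMetric.diam (f '' (V \ U)) < ε})
    (fun γ _ ih => ⋃ (β : Ordinal) (h : β < γ), ih β h)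

/-- `f` has countable oscillation rank: `β(f) < ω₁`, i.e. for every `ε > 0` the derivation
reaches `X` at some countable ordinal. -/
def CountableOscRank [TopologicalSpace X] [PseudoEMetricSpace E] (f : X → E) : Prop :=
  ∀ ε : ℝ≥0∞, 0 < ε → ∃ α < ω₁, oscSet f ε α = Set.univ

/-- A transfinite sequence `(V α)_{α ≤ κ}` of open sets has property `*(f, ε)`. -/
def StarProp [TopologicalSpace X] [PseudoEMetricSpace E] (f : X → E) (ε : ℝ≥0∞)
    (κ : Ordinal.{u}) (V : Ordinal.{u} → Set X) : Prop :=
  (∀ α, α ≤ κ → IsOpen (V α)) ∧ (∀ α β : Ordinal, α ≤ β → β ≤ κ → V α ⊆ V β) ∧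
  V 0 = ∅ ∧ V κ = Set.univ ∧
  (∀ γ, γ ≤ κ → Order.IsSuccLimit γ → V γ = ⋃ α < γ, V α) ∧
  (∀ α < κ, ∀ x ∈ V (α + 1) \ V α, ∃ W : Set X, IsOpen W ∧ x ∈ W ∧
    EMetric.diam (f '' (W \ V α)) < ε)

/-- Uniform distance `d(f, g) = sup_x ρ(f x, g x)` (in `[0, ∞]`). -/
noncomputable def unifDist [PseudoEMetricSpace E] (f g : X → E) : ℝ≥0∞ :=
  ⨆ x, edist (f x) (g x)

/-- Distance from `f` to the family of σ-fragmented mappings. -/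
noncomputable def distToSFrag [TopologicalSpace X] [PseudoEMetricSpace E] (f : X → E) : ℝ≥0∞ :=
  ⨅ (g : {g : X → E // sfragIdx g = 0}), unifDist f g.1

end Defs

/-- The oscillation rank of the characteristic function of `A` equals exactly `a`. -/
def IndicatorOscRankExactly {X : Type u} [TopologicalSpace X] (A : Set X)
    (a : Ordinal.{u}) : Prop :=
  (∀ ε : ℝ≥0∞, 0 < ε →
    ∃ b ≤ a, oscSet (A.indicator (fun _ => (1 : ℝ))) ε b = Set.univ) ∧
  (∀ a' < a, ∃ ε : ℝ≥0∞, 0 < ε ∧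
    ∀ b ≤ a', oscSet (A.indicator (fun _ => (1 : ℝ))) ε b ≠ Set.univ)

/-!
Induction on the countable ordinal `a`, working at scale `ε = 1`, which for an indicator is the
finest scale: the derivations at all `ε ≤ 1` coincide. The empty space has rank `0`. At a limit
`a`, the disjoint union of spaces whose ranks enumerate `Iio a` has rank `a`. At a successor
`b + 1`, take countably many copies of a space of rank `b`, carrying alternately `A` and `Aᶜ`,
shrinking and converging to one extra point (a hedgehog). The copies are exhausted exactly at
stage `b`; until then every neighbourhood of the extra point contains surviving points inside
and outside the set, so the extra point is removed exactly at stage `b + 1`.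
-/

section OscSet

variable {X Y : Type u} {E F : Type*} [TopologicalSpace X] [TopologicalSpace Y]
  [PseudoEMetricSpace E] [PseudoEMetricSpace F] {f : X → E} {g : X → F} {ε δ : ℝ≥0∞}
  {b c : Ordinal.{u}}

@[simp]
theorem oscSet_zero : oscSet f ε 0 = ∅ :=
  Ordinal.limitRecOn_zero ..

theorem mem_oscSet_add_one {x : X} : x ∈ oscSet f ε (b + 1) ↔
    x ∈ oscSet f ε b ∨ ∃ V, IsOpen V ∧ x ∈ V ∧ Metric.ediam (f '' (V \ oscSet f ε b)) < ε := by
  rw [oscSet, Ordinal.limitRecOn_add_one, ← oscSet]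
  exact or_congr_right' and_iff_right

theorem oscSet_of_isSuccLimit (hb : Order.IsSuccLimit b) :
    oscSet f ε b = ⋃ c < b, oscSet f ε c := by
  rw [oscSet, Ordinal.limitRecOn_limit _ _ _ _ hb]
  rfl

theorem oscSet_subset_oscSet (h : ∀ s, Metric.ediam (f '' s) < ε → Metric.ediam (g '' s) < δ)
    (b : Ordinal.{u}) : oscSet f ε b ⊆ oscSet g δ b := by
  induction b using Ordinal.limitRecOn with
  | zero => simp
  | add_one b ih =>
    intro x hx
    rw [mem_oscSet_add_one] at hx ⊢
    refine hx.imp (@ih x) fun ⟨V, hV, hxV, hdiam⟩ => ⟨V, hV, hxV, h _ ?_⟩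
    exact (Metric.ediam_mono (image_mono (sdiff_subset_sdiff_right ih))).trans_lt hdiam
  | limit b hb ih =>
    rw [oscSet_of_isSuccLimit hb, oscSet_of_isSuccLimit hb]
    exact iUnion₂_mono ih

theorem Isometry.oscSet_comp {φ : E → F} (hφ : Isometry φ) (b : Ordinal.{u}) :
    oscSet (φ ∘ f) ε b = oscSet f ε b := by
  refine (oscSet_subset_oscSet (fun s hs => ?_) b).antisymm
    (oscSet_subset_oscSet (fun s hs => ?_) b) <;>
  rwa [image_comp, hφ.ediam_image] at *

theorem preimage_oscSet {e : X → Y} (he : Continuous e) (he' : IsOpenMap e) (f : Y → E)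
    (b : Ordinal.{u}) : e ⁻¹' oscSet f ε b = oscSet (f ∘ e) ε b := by
  induction b using Ordinal.limitRecOn with
  | zero => simp
  | add_one b ih =>
    ext x
    rw [mem_preimage, mem_oscSet_add_one, mem_oscSet_add_one, ← ih, mem_preimage]
    refine or_congr_right ⟨fun ⟨V, hV, hxV, hdiam⟩ => ⟨e ⁻¹' V, hV.preimage he, hxV, ?_⟩,
      fun ⟨W, hW, hxW, hdiam⟩ => ⟨e '' W, he' W hW, mem_image_of_mem e hxW, ?_⟩⟩
    · refine (Metric.ediam_mono ?_).trans_lt hdiam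
      rw [image_comp, ← preimage_sdiff]
      exact image_mono (image_preimage_subset e _)
    · rwa [← image_sdiff_preimage, ← image_comp]
  | limit b hb ih =>
    rw [oscSet_of_isSuccLimit hb, oscSet_of_isSuccLimit hb, preimage_iUnion₂]
    exact iUnion₂_congr ih

theorem notMem_oscSet_of_le_ediam {x : X} (hx : ∀ c < b, ∀ V, IsOpen V → x ∈ V →
    ε ≤ Metric.ediam (f '' (V \ oscSet f ε c))) (hcb : c ≤ b) : x ∉ oscSet f ε c := by
  induction c using Ordinal.limitRecOn with
  | zero => simp
  | add_one c ih =>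
    have hc : c < b := (Order.lt_add_one_iff.mpr le_rfl).trans_le hcb
    rw [mem_oscSet_add_one, not_or, not_exists]
    exact ⟨ih hc.le, fun V ⟨hV, hxV, hdiam⟩ => (hx c hc V hV hxV).not_gt hdiam⟩
  | limit c hc ih =>
    rw [oscSet_of_isSuccLimit hc, mem_iUnion₂, not_exists]
    exact fun d ⟨hdc, hxd⟩ => ih d hdc (hdc.le.trans hcb) hxd

theorem oscSet_add_one_eq_univ (hε : 0 < ε) (hb : (oscSet f ε b)ᶜ.Subsingleton) :
    oscSet f ε (b + 1) = Set.univ := by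
  refine eq_univ_of_forall fun x => mem_oscSet_add_one.mpr <| or_iff_not_imp_left.mpr
    fun _ => ⟨Set.univ, isOpen_univ, mem_univ x, ?_⟩
  rw [← compl_eq_univ_sdiff, Metric.ediam_subsingleton (hb.image f)]
  exact hε

end OscSet

local notation:max "χ " A:max => Set.indicator A fun _ => (1 : ℝ)

section Indicator

variable {X Y : Type u} {A s : Set X} {ε : ℝ≥0∞}

theorem one_le_ediam_image_indicator {x y : X} (hxs : x ∈ s) (hys : y ∈ s)
    (hxy : x ∈ A ↔ y ∉ A) : 1 ≤ Metric.ediam (χ A '' s) :=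
  calc (1 : ℝ≥0∞) = edist (χ A x) (χ A y) := by
        by_cases hx : x ∈ A <;> simp [hx, hxy.not_left.mp, hxy.mp, edist_dist]
    _ ≤ _ := Metric.edist_le_ediam_of_mem (mem_image_of_mem _ hxs) (mem_image_of_mem _ hys)

theorem ediam_image_indicator_eq_zero_of_lt_one (h : Metric.ediam (χ A '' s) < 1) :
    Metric.ediam (χ A '' s) = 0 := by
  refine Metric.ediam_subsingleton ?_
  rintro _ ⟨x, hxs, rfl⟩ _ ⟨y, hys, rfl⟩
  by_cases hx : x ∈ A <;> by_cases hy : y ∈ A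
  · simp [hx, hy]
  · exact absurd h (one_le_ediam_image_indicator hxs hys (iff_of_true hx hy)).not_gt
  · exact absurd h (one_le_ediam_image_indicator hys hxs (iff_of_true hy hx)).not_gt
  · simp [hx, hy]

variable [TopologicalSpace X] [TopologicalSpace Y]

theorem oscSet_indicator_one_subset (hε : 0 < ε) (b : Ordinal.{u}) :
    oscSet (χ A) 1 b ⊆ oscSet (χ A) ε b :=
  oscSet_subset_oscSet (fun _ hs => (ediam_image_indicator_eq_zero_of_lt_one hs).trans_lt hε) b

theorem oscSet_indicator_compl (b : Ordinal.{u}) : oscSet (χ Aᶜ) ε b = oscSet (χ A) ε b := by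
  have hφ : Isometry fun t : ℝ => 1 - t := Isometry.of_dist_eq fun _ _ => dist_sub_left _ _ _
  have hcompl : χ Aᶜ = (fun t => 1 - t) ∘ χ A := by
    ext x
    by_cases hx : x ∈ A <;> simp [hx]
  rw [hcompl, hφ.oscSet_comp]

theorem oscSet_indicator_setOf_iff (P : Prop) (b : Ordinal.{u}) :
    oscSet (χ {x | x ∈ A ↔ P}) ε b = oscSet (χ A) ε b := by
  by_cases hP : P
  · simp only [hP, iff_true, ofPred_mem_eq]
  · simp only [hP, iff_false]
    exact oscSet_indicator_compl b

theorem preimage_oscSet_indicator {e : Y → X} (he : Continuous e) (he' : IsOpenMap e)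
    (b : Ordinal.{u}) : e ⁻¹' oscSet (χ A) ε b = oscSet (χ (e ⁻¹' A)) ε b :=
  preimage_oscSet he he' _ b

end Indicator

open Topology

def Hedgehog (X : Type u) : Type u := Option (ℕ × X)

namespace Hedgehog

variable {X : Type u}

def center : Hedgehog X := none

def copy (n : ℕ) (x : X) : Hedgehog X := some (n, x)

noncomputable def radius (n : ℕ) : ℝ := 1 / ((n : ℝ) + 1)

theorem radius_pos (n : ℕ) : 0 < radius n := Nat.one_div_pos_of_nat

variable [MetricSpace X]

/-- The copies shrink to the center: the `n`-th one has diameter at most `2 * radius n` and lies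
at distance `radius n` from it, and distinct copies are joined only through the center. -/
noncomputable def hdist : Hedgehog X → Hedgehog X → ℝ
  | none, none => 0
  | none, some (n, _) | some (n, _), none => radius n
  | some (n, x), some (m, y) =>
    if n = m then min (dist x y) (2 * radius n) else radius n + radius m

theorem hdist_triangle (p q r : Hedgehog X) : hdist p r ≤ hdist p q + hdist q r := by
  rcases p with _ | ⟨n, x⟩ <;> rcases q with _ | ⟨m, y⟩ <;> rcases r with _ | ⟨k, z⟩
  case some.some.some => have := dist_triangle x y z; grind [hdist, radius_pos, dist_nonneg]
  all_goals grind [hdist, radius_pos, dist_nonneg]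

noncomputable instance : MetricSpace (Hedgehog X) where
  dist := hdist
  dist_self p := by rcases p with _ | ⟨n, x⟩ <;> grind [hdist, radius_pos, dist_self]
  dist_comm p q := by
    rcases p with _ | ⟨n, x⟩ <;> rcases q with _ | ⟨m, y⟩ <;> grind [hdist, dist_comm]
  dist_triangle := hdist_triangle
  eq_of_dist_eq_zero {p q} := by
    rcases p with _ | ⟨n, x⟩ <;> rcases q with _ | ⟨m, y⟩ <;>
      grind [hdist, radius_pos, dist_nonneg, dist_eq_zero]

theorem dist_center_copy (n : ℕ) (x : X) : dist center (copy n x) = radius n := rfl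

theorem dist_copy_copy (n : ℕ) (x y : X) :
    dist (copy n x) (copy n y) = min (dist x y) (2 * radius n) :=
  if_pos rfl

theorem ball_copy_subset_range (n : ℕ) (x : X) :
    Metric.ball (copy n x) (radius n) ⊆ range (copy n) := by
  rintro (_ | ⟨m, y⟩) hq
  · exact absurd hq (lt_irrefl (radius n))
  · change dist (copy m y) (copy n x) < radius n at hq
    by_cases hmn : m = n
    · exact ⟨y, hmn ▸ rfl⟩
    · have hdist : dist (copy m y) (copy n x) = radius m + radius n := if_neg hmn
      linarith [radius_pos m]

theorem isUniformEmbedding_copy (n : ℕ) : IsUniformEmbedding (copy n : X → Hedgehog X) := by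
  refine Metric.isUniformEmbedding_iff'.mpr ⟨fun ε hε => ⟨ε, hε, fun h => ?_⟩,
    fun δ hδ => ⟨min δ (2 * radius n), lt_min hδ (by linarith [radius_pos n]), fun h => ?_⟩⟩
  · exact (dist_copy_copy n _ _).trans_lt ((min_le_left _ _).trans_lt h)
  · rw [dist_copy_copy] at h
    exact not_le.mp fun hδ => (min_le_min_right _ hδ).not_gt h

theorem isOpenEmbedding_copy (n : ℕ) : IsOpenEmbedding (copy n : X → Hedgehog X) :=
  ⟨(isUniformEmbedding_copy n).isEmbedding, Metric.isOpen_iff.mpr <| by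
    rintro _ ⟨x, rfl⟩
    exact ⟨radius n, radius_pos n, ball_copy_subset_range n x⟩⟩

theorem eventually_range_copy_subset {V : Set (Hedgehog X)} (hV : V ∈ 𝓝 center) :
    ∀ᶠ n in atTop, range (copy n : X → Hedgehog X) ⊆ V := by
  obtain ⟨ε, hε, hball⟩ := Metric.mem_nhds_iff.mp hV
  filter_upwards [(tendsto_order.1 tendsto_one_div_add_atTop_nhds_zero_nat).2 ε hε] with n hn
  rintro _ ⟨x, rfl⟩
  exact hball (by rwa [Metric.mem_ball, dist_comm])

/-- A Cauchy filter either clusters at the center or, being eventually far from it, is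
eventually confined to a single copy, which is complete. -/
instance [CompleteSpace X] : CompleteSpace (Hedgehog X) := by
  refine ⟨fun {f} hf => ?_⟩
  by_cases hc : ClusterPt center f
  · exact ⟨center, le_nhds_of_cauchy_adhp hf hc⟩
  obtain ⟨ε, hε, hfar⟩ := Metric.nhds_basis_ball.disjoint_iff_left.mp
    (clusterPt_iff_not_disjoint.not_left.mp hc)
  obtain ⟨t, htf, ht⟩ := (Metric.cauchy_iff.mp hf).2 ε hε
  obtain ⟨_ | ⟨n, x⟩, hpt, hp⟩ := hf.1.nonempty_of_mem (inter_mem htf hfar)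
  · exact absurd (Metric.mem_ball_self hε) hp
  have hn : ε ≤ radius n := by
    rw [← dist_center_copy n x, dist_comm]
    exact not_lt.mp hp
  have hsub : t ⊆ range (copy n) := fun q hq =>
    ball_copy_subset_range n x ((ht q hq _ hpt).trans_le hn)
  obtain ⟨y, -, hy⟩ := (isUniformEmbedding_copy n).isUniformInducing.isComplete_range f hf
    (le_principal_iff.mpr (mem_of_superset htf hsub))
  exact ⟨y, hy⟩

end Hedgehog

section ExactRank

variable {X : Type u} [TopologicalSpace X]

def ExactIndicatorRank (A : Set X) (a : Ordinal.{u}) : Prop :=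
  oscSet (χ A) 1 a = Set.univ ∧ ∀ b < a, oscSet (χ A) 1 b ≠ Set.univ

theorem ExactIndicatorRank.indicatorOscRankExactly {A : Set X} {a : Ordinal.{u}}
    (h : ExactIndicatorRank A a) : IndicatorOscRankExactly A a :=
  ⟨fun _ hε => ⟨a, le_rfl, eq_univ_of_univ_subset (h.1 ▸ oscSet_indicator_one_subset hε a)⟩,
    fun _ ha' => ⟨1, one_pos, fun b hb => h.2 b (hb.trans_lt ha')⟩⟩

theorem exactIndicatorRank_zero [IsEmpty X] (A : Set X) : ExactIndicatorRank A 0 :=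
  ⟨Subsingleton.elim _ _, fun _ hb => absurd hb not_lt_zero⟩

theorem exactIndicatorRank_sigma {T : ℕ → Type u} [∀ n, TopologicalSpace (T n)]
    {A : ∀ n, Set (T n)} {r : ℕ → Ordinal.{u}} {a : Ordinal.{u}} (ha : Order.IsSuccLimit a)
    (hr : range r = Iio a) (hA : ∀ n, ExactIndicatorRank (A n) (r n)) :
    ExactIndicatorRank (univ.sigma A) a := by
  have hmk (n : ℕ) (c : Ordinal.{u}) :
      Sigma.mk n ⁻¹' oscSet (χ (univ.sigma A)) 1 c = oscSet (χ (A n)) 1 c := by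
    rw [preimage_oscSet_indicator continuous_sigmaMk isOpenMap_sigmaMk,
      mk_preimage_sigma (mem_univ n)]
  refine ⟨eq_univ_of_forall fun ⟨n, x⟩ => ?_, fun c hc hU => ?_⟩
  · rw [oscSet_of_isSuccLimit ha, mem_iUnion₂]
    refine ⟨r n, hr.subset (mem_range_self n), ?_⟩
    rw [← mem_preimage, hmk, (hA n).1]
    trivial
  · obtain ⟨n, hn⟩ : Order.succ c ∈ range r := hr ▸ ha.succ_lt hc
    refine (hA n).2 c (hn ▸ Order.lt_succ c) ?_
    rw [← hmk, hU, preimage_univ]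

end ExactRank

namespace Hedgehog

variable {X : Type u} [MetricSpace X]

def alternating (A : Set X) : Set (Hedgehog X) :=
  {p | Option.elim p False fun q => (q.2 ∈ A ↔ Even q.1)}

theorem _root_.ExactIndicatorRank.hedgehog {A : Set X} {b : Ordinal.{u}}
    (h : ExactIndicatorRank A b) : ExactIndicatorRank (alternating A) (b + 1) := by
  have hcopy (n : ℕ) (c : Ordinal.{u}) :
      copy n ⁻¹' oscSet (χ (alternating A)) 1 c = oscSet (χ A) 1 c := by
    rw [preimage_oscSet_indicator (isOpenEmbedding_copy n).continuous
      (isOpenEmbedding_copy n).isOpenMap]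
    exact oscSet_indicator_setOf_iff (Even n) c
  have hcenter (c : Ordinal.{u}) (hc : c ≤ b) : center ∉ oscSet (χ (alternating A)) 1 c := by
    refine notMem_oscSet_of_le_ediam (fun d hd V hV hcV => ?_) hc
    obtain ⟨x, hx⟩ : ∃ x, x ∉ oscSet (χ A) 1 d :=
      not_forall.mp fun hall => h.2 d hd (eq_univ_of_forall hall)
    obtain ⟨N, hN⟩ := eventually_atTop.mp (eventually_range_copy_subset (hV.mem_nhds hcV))
    have hmem (n : ℕ) (hn : N ≤ n) : copy n x ∈ V \ oscSet (χ (alternating A)) 1 d :=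
      ⟨hN n hn (mem_range_self x), by rwa [← mem_preimage, hcopy]⟩
    have hparity : copy (2 * N) x ∈ alternating A ↔ copy (2 * N + 1) x ∉ alternating A := by
      show (x ∈ A ↔ Even (2 * N)) ↔ ¬(x ∈ A ↔ Even (2 * N + 1))
      simp
    exact one_le_ediam_image_indicator (hmem _ (by omega)) (hmem _ (by omega)) hparity
  have hcopies : (oscSet (χ (alternating A)) 1 b)ᶜ ⊆ {center} := by
    rintro (_ | ⟨n, x⟩) hp
    · rfl
    · have hx : x ∈ copy n ⁻¹' oscSet (χ (alternating A)) 1 b := by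
        rw [hcopy, h.1]
        trivial
      exact absurd hx hp
  exact ⟨oscSet_add_one_eq_univ one_pos (subsingleton_singleton.anti hcopies),
    fun c hc hU => hcenter c (Order.lt_add_one_iff.mp hc) (hU ▸ mem_univ _)⟩

end Hedgehog

theorem countable_Iio_of_lt_omega_one {a : Ordinal.{u}} (ha : a < ω₁) : (Iio a).Countable := by
  rw [← Cardinal.le_aleph0_iff_set_countable, Cardinal.mk_Iio_ordinal, Cardinal.lift_le_aleph0,
    ← Cardinal.lt_aleph_one_iff, ← Cardinal.lt_omega_iff_card_lt]
  exact ha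

theorem exists_exactIndicatorRank {a : Ordinal.{0}} (ha : a < ω₁) :
    ∃ (X : Type) (_ : MetricSpace X), CompleteSpace X ∧ ∃ A : Set X, ExactIndicatorRank A a := by
  induction a using Ordinal.limitRecOn with
  | zero => exact ⟨Empty, inferInstance, inferInstance, ∅, exactIndicatorRank_zero ∅⟩
  | add_one b ih =>
    obtain ⟨X, _, _, A, hA⟩ := ih ((Order.lt_add_one_iff.mpr le_rfl).trans ha)
    exact ⟨Hedgehog X, inferInstance, inferInstance, _, hA.hedgehog⟩
  | limit a hlim ih =>
    obtain ⟨r, hr⟩ := (countable_Iio_of_lt_omega_one ha).exists_eq_range ⟨0, hlim.bot_lt⟩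
    have hr' (n : ℕ) : r n < a := hr.symm.subset (mem_range_self n)
    choose T _ _ A hA using fun n => ih (r n) (hr' n) ((hr' n).trans ha)
    exact ⟨Σ n, T n, Metric.Sigma.metricSpace, Metric.Sigma.completeSpace, _,
      exactIndicatorRank_sigma hlim hr.symm hA⟩

/-- for every countable ordinal `a` there is a completely metrizable space
`X` and `A ⊆ X` whose characteristic function has oscillation rank exactly `a`. -/
theorem stmt_18 (a : Ordinal.{0}) (ha : a < ω₁) :
    ∃ (X : Type) (m : MetricSpace X),
      @CompleteSpace X m.toUniformSpace ∧
      ∃ A : Set X,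
        @IndicatorOscRankExactly X m.toUniformSpace.toTopologicalSpace A a := by
  obtain ⟨X, m, hX, A, hA⟩ := exists_exactIndicatorRank ha
  exact ⟨X, m, hX, A, hA.indicatorOscRankExactly⟩
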